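/- arXiv:math/9302213 — 3 statements merged into one kernel-verified Lean document; each statement's English description precedes it below -/
import Mathlib

section
/- For each p with 0 < p ≤ 1 there exists a constant C > 0 such that the following holds for all sufficiently large integers n and all integers K ≥ 1: let T : ℝ^n → ℝ^K and P : ℝ^K → ℝ^n be linear maps with P ∘ T = Id, and suppose ‖T(x)‖_∞ ≤ ‖x‖_p for all x ∈ ℝ^n, where ‖x‖_p = (∑_{i=1}^n |x_i|^p)^{1/p} and ‖·‖_∞ is the supremum norm on ℝ^K. Then there exists w ∈ ℝ^K with ‖w‖_∞ ≤ 1 and ‖P(w)‖_p ≥ C · n^{1/p − 1/2} · (log n)^{-1/2}. -/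
/-
Test the factorization on the `2ⁿ` sign vectors `x`. Each coordinate of `T x` is a Rademacher sum
with coefficients in `[-1, 1]`, so by the exponential moment bound its excess over
`r = √(2/p · n log n)` averages to at most `δ = (2n/r) n^(-1/p)`. Truncating `T x` at height `r`
writes `x = P (T x) = r • P w + P e` with `‖w‖_∞ ≤ 1`, hence `n ≤ r^p ‖P w‖_p^p + ‖P e‖_p^p`.
By concavity of `t ↦ t^p`, the average of `|(P e)_i|^p` is at most `(R_i δ)^p`, where `R_i` is the
`ℓ¹`-norm of the `i`-th row of `P`, and `R_i` itself is `(P w)_i` for the sign vector `w` of that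
row. So if no `w` in the unit ball had `‖P w‖_p^p ≥ n / (2 r^p)`, then on average the first term
would be less than `n / 2` and, as `n δ^p ≤ r^p`, the second at most `n / 2`. Finally
`(n / (2 r^p))^(1/p)` is the claimed bound `C n^(1/p - 1/2) (log n)^(-1/2)`.
-/

open Finset Matrix Real

lemma max_zero_abs_sub_le_exp {s : ℝ} (hs : 0 < s) (r y : ℝ) :
    max 0 (|y| - r) ≤ (exp (s * y) + exp (-s * y)) * exp (-(s * r)) / s := by
  have hlin : max 0 (|y| - r) ≤ exp (s * (|y| - r)) / s :=
    max_le (by positivity) (by rw [le_div_iff₀ hs]; linarith [add_one_le_exp (s * (|y| - r))])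
  have habs : exp (s * |y|) ≤ exp (s * y) + exp (-s * y) := by
    rcases abs_cases y with ⟨h, _⟩ | ⟨h, _⟩ <;> rw [h]
    · linarith [exp_pos (-s * y)]
    · rw [mul_neg, ← neg_mul]; linarith [exp_pos (s * y)]
  calc max 0 (|y| - r) ≤ exp (s * |y|) * exp (-(s * r)) / s := by
        rwa [← exp_add, ← mul_neg, ← mul_add, ← sub_eq_add_neg]
    _ ≤ _ := by gcongr

lemma abs_add_rpow_le {p : ℝ} (hp0 : 0 ≤ p) (hp1 : p ≤ 1) (x y : ℝ) :
    |x + y| ^ p ≤ |x| ^ p + |y| ^ p :=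
  (rpow_le_rpow (abs_nonneg _) (abs_add_le x y) hp0).trans
    (rpow_add_le_add_rpow (abs_nonneg x) (abs_nonneg y) hp0 hp1)

lemma sum_rpow_le_card_mul_rpow_of_sum_le {α : Type*} {s : Finset α} {f : α → ℝ} {p c : ℝ}
    (hp0 : 0 ≤ p) (hp1 : p ≤ 1) (hf : ∀ a ∈ s, 0 ≤ f a) (h : ∑ a ∈ s, f a ≤ #s * c) :
    ∑ a ∈ s, f a ^ p ≤ #s * c ^ p := by
  rcases s.eq_empty_or_nonempty with rfl | hs
  · simp
  have hN : (0 : ℝ) < #s := by exact_mod_cast hs.card_pos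
  have hjensen := (concaveOn_rpow hp0 hp1).le_map_sum (t := s) (w := fun _ => (#s : ℝ)⁻¹)
    (p := f) (fun _ _ => by positivity) (by simp [hN.ne']) hf
  simp only [smul_eq_mul, ← mul_sum] at hjensen
  have hmean : (#s : ℝ)⁻¹ * ∑ a ∈ s, f a ≤ c := by rwa [inv_mul_le_iff₀ hN]
  calc ∑ a ∈ s, f a ^ p = #s * ((#s : ℝ)⁻¹ * ∑ a ∈ s, f a ^ p) := by field_simp
    _ ≤ #s * c ^ p := by
      gcongr
      exact hjensen.trans (rpow_le_rpow (by positivity [sum_nonneg hf]) hmean hp0)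

noncomputable def signVectors (ι : Type*) [Fintype ι] [DecidableEq ι] : Finset (ι → ℝ) :=
  Fintype.piFinset fun _ => {-1, 1}

namespace signVectors

variable {ι : Type*} [Fintype ι] [DecidableEq ι]

lemma card : #(signVectors ι) = 2 ^ Fintype.card ι := by
  rw [signVectors, Fintype.card_piFinset, prod_const, card_univ, card_pair (by norm_num)]

lemma abs_apply {x : ι → ℝ} (hx : x ∈ signVectors ι) (i : ι) : |x i| = 1 := by
  have hxi := Fintype.mem_piFinset.1 hx i
  simp only [mem_insert, mem_singleton] at hxi
  rcases hxi with h | h <;> simp [h]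

lemma sum_exp_dotProduct (t : ι → ℝ) :
    ∑ x ∈ signVectors ι, exp (t ⬝ᵥ x) = ∏ k, 2 * cosh (t k) := by
  simp_rw [dotProduct, exp_sum, signVectors]
  rw [← prod_univ_sum (fun _ => ({-1, 1} : Finset ℝ)) fun k y => exp (t k * y)]
  refine prod_congr rfl fun k _ => ?_
  rw [sum_pair (by norm_num), cosh_eq]
  ring_nf

lemma sum_exp_mul_dotProduct_le {t : ι → ℝ} (ht : ∀ k, |t k| ≤ 1) (s : ℝ) :
    ∑ x ∈ signVectors ι, exp (s * (t ⬝ᵥ x)) ≤ (2 * exp (s ^ 2 / 2)) ^ Fintype.card ι := by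
  simp_rw [← smul_eq_mul (a := s), ← smul_dotProduct, sum_exp_dotProduct]
  rw [← card_univ, ← prod_const]
  gcongr with k
  calc cosh ((s • t) k) ≤ exp ((s * t k) ^ 2 / 2) := cosh_le_exp_half_sq _
    _ ≤ exp (s ^ 2 / 2) := by
      have : t k ^ 2 ≤ 1 := by nlinarith [sq_abs (t k), abs_nonneg (t k), ht k]
      rw [exp_le_exp, mul_pow]
      nlinarith [sq_nonneg s]

lemma sum_max_abs_dotProduct_sub_le {t : ι → ℝ} (ht : ∀ k, |t k| ≤ 1) {s : ℝ} (hs : 0 < s)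
    (r : ℝ) :
    ∑ x ∈ signVectors ι, max 0 (|t ⬝ᵥ x| - r) ≤
      2 * (2 * exp (s ^ 2 / 2)) ^ Fintype.card ι * exp (-(s * r)) / s := by
  calc ∑ x ∈ signVectors ι, max 0 (|t ⬝ᵥ x| - r)
      ≤ ∑ x ∈ signVectors ι, (exp (s * (t ⬝ᵥ x)) + exp (-s * (t ⬝ᵥ x))) * exp (-(s * r)) / s :=
        sum_le_sum fun x _ => max_zero_abs_sub_le_exp hs r _
    _ = (∑ x ∈ signVectors ι, exp (s * (t ⬝ᵥ x)) + ∑ x ∈ signVectors ι, exp (-s * (t ⬝ᵥ x)))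
          * exp (-(s * r)) / s := by rw [← sum_div, ← sum_mul, sum_add_distrib]
    _ ≤ ((2 * exp (s ^ 2 / 2)) ^ Fintype.card ι + (2 * exp ((-s) ^ 2 / 2)) ^ Fintype.card ι)
          * exp (-(s * r)) / s := by
        gcongr <;> exact sum_exp_mul_dotProduct_le ht _
    _ = _ := by rw [neg_sq]; ring

lemma sum_max_abs_dotProduct_sub_le_exp_neg_sq {t : ι → ℝ} (ht : ∀ k, |t k| ≤ 1)
    (hι : 0 < Fintype.card ι) {r : ℝ} (hr : 0 < r) :
    ∑ x ∈ signVectors ι, max 0 (|t ⬝ᵥ x| - r) ≤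
      2 ^ Fintype.card ι * (2 * Fintype.card ι / r * exp (-(r ^ 2 / (2 * Fintype.card ι)))) := by
  have hn : (0 : ℝ) < Fintype.card ι := by exact_mod_cast hι
  refine (sum_max_abs_dotProduct_sub_le ht (div_pos hr hn) r).trans_eq ?_
  rw [mul_pow, ← exp_nat_mul]
  have : Fintype.card ι * ((r / Fintype.card ι) ^ 2 / 2) + -(r / Fintype.card ι * r) =
      -(r ^ 2 / (2 * Fintype.card ι)) := by
    field_simp
    ring
  rw [← this, exp_add]
  field_simp

end signVectors

section Factorization

variable {ι κ : Type*} [Fintype κ]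

lemma exists_eq_smul_add_abs_le (y : κ → ℝ) {r : ℝ} (hr : 0 < r) :
    ∃ w e : κ → ℝ, ‖w‖ ≤ 1 ∧ y = r • w + e ∧ ∀ j, |e j| ≤ max 0 (|y j| - r) := by
  set c : κ → ℝ := fun j => max (-r) (min r (y j))
  refine ⟨r⁻¹ • c, y - c, (pi_norm_le_iff_of_nonneg zero_le_one).2 fun j => ?_, ?_,
    fun j => by simp only [c, Pi.sub_apply]; grind⟩
  · rw [Pi.smul_apply, norm_smul, norm_inv, Real.norm_eq_abs, Real.norm_eq_abs, abs_of_pos hr,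
      inv_mul_le_one₀ hr]
    exact abs_le.2 ⟨le_max_left _ _, max_le (by linarith) (min_le_left _ _)⟩
  · rw [smul_smul, mul_inv_cancel₀ hr.ne', one_smul, add_sub_cancel]

lemma sum_abs_mulVec_rpow_le {α : Type*} {p δ : ℝ} (hp0 : 0 ≤ p) (hp1 : p ≤ 1) (hδ : 0 ≤ δ)
    (B : Matrix ι κ ℝ) (i : ι) {s : Finset α} {v : α → κ → ℝ}
    (hv : ∀ j, ∑ a ∈ s, |v a j| ≤ #s * δ) :
    ∑ a ∈ s, |(B *ᵥ v a) i| ^ p ≤ #s * ((∑ j, |B i j|) ^ p * δ ^ p) := by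
  rw [← mul_rpow (sum_nonneg fun j _ => abs_nonneg _) hδ]
  refine sum_rpow_le_card_mul_rpow_of_sum_le hp0 hp1 (fun _ _ => abs_nonneg _) ?_
  calc ∑ a ∈ s, |(B *ᵥ v a) i| ≤ ∑ a ∈ s, ∑ j, |B i j| * |v a j| := by
        gcongr with a
        exact (abs_sum_le_sum_abs _ _).trans_eq (by simp only [abs_mul])
    _ = ∑ j, |B i j| * ∑ a ∈ s, |v a j| := by rw [sum_comm]; simp only [mul_sum]
    _ ≤ ∑ j, |B i j| * (#s * δ) := by gcongr with j; exact hv j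
    _ = #s * ((∑ j, |B i j|) * δ) := by rw [← sum_mul]; ring

variable [Fintype ι]

lemma exists_norm_le_one_sum_abs_rpow_le {p : ℝ} (B : Matrix ι κ ℝ) (i : ι) :
    ∃ w : κ → ℝ, ‖w‖ ≤ 1 ∧ (∑ j, |B i j|) ^ p ≤ ∑ i', |(B *ᵥ w) i'| ^ p := by
  refine ⟨fun j => SignType.sign (B i j), ?_, ?_⟩
  · refine (pi_norm_le_iff_of_nonneg zero_le_one).2 fun j => ?_
    rcases lt_trichotomy (B i j) 0 with h | h | h <;> simp [h]
  · have hBw : (B *ᵥ fun j => (SignType.sign (B i j) : ℝ)) i = ∑ j, |B i j| := by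
      simp [mulVec, dotProduct, self_mul_sign]
    rw [← abs_of_nonneg (sum_nonneg fun j _ => abs_nonneg (B i j)), ← hBw]
    exact single_le_sum (f := fun i' => |(B *ᵥ _) i'| ^ p) (fun _ _ => by positivity) (mem_univ i)

lemma card_le_rpow_mul_sum_abs_mulVec_rpow_add {p r : ℝ} (hp0 : 0 ≤ p) (hp1 : p ≤ 1)
    (hr : 0 ≤ r) (B : Matrix ι κ ℝ) {x : ι → ℝ} (hx : ∀ i, |x i| = 1) {u v : κ → ℝ}
    (hBx : B *ᵥ (r • u + v) = x) :
    Fintype.card ι ≤ r ^ p * ∑ i, |(B *ᵥ u) i| ^ p + ∑ i, |(B *ᵥ v) i| ^ p := by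
  rw [mulVec_add, mulVec_smul] at hBx
  calc (Fintype.card ι : ℝ) = ∑ i, |x i| ^ p := by simp [hx]
    _ = ∑ i, |r * (B *ᵥ u) i + (B *ᵥ v) i| ^ p := by simp [← hBx]
    _ ≤ ∑ i, (r ^ p * |(B *ᵥ u) i| ^ p + |(B *ᵥ v) i| ^ p) := by
      gcongr with i
      refine (abs_add_rpow_le hp0 hp1 _ _).trans_eq ?_
      rw [abs_mul, mul_rpow (abs_nonneg _) (abs_nonneg _), abs_of_nonneg hr]
    _ = _ := by rw [sum_add_distrib, mul_sum]

variable [DecidableEq ι]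

lemma abs_toMatrix'_apply_le_one {p : ℝ} (hp : p ≠ 0) {T : (ι → ℝ) →ₗ[ℝ] κ → ℝ}
    (hT : ∀ x, ‖T x‖ ≤ (∑ i, |x i| ^ p) ^ (1 / p)) (j : κ) (k : ι) :
    |LinearMap.toMatrix' T j k| ≤ 1 := by
  rw [LinearMap.toMatrix'_apply, ← Real.norm_eq_abs]
  refine (norm_le_pi_norm _ j).trans ((hT _).trans_eq ?_)
  rw [sum_eq_single k (fun i _ hi => by simp [hi, zero_rpow hp]) (by simp)]
  simp

theorem exists_norm_le_one_card_div_le_sum_abs_mulVec_rpow {p r δ : ℝ} (hp0 : 0 < p)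
    (hp1 : p ≤ 1) (hr : 0 < r) (hδ0 : 0 ≤ δ) {A : Matrix κ ι ℝ} {B : Matrix ι κ ℝ}
    (hBA : B * A = 1)
    (htail : ∀ j, ∑ x ∈ signVectors ι, max 0 (|A j ⬝ᵥ x| - r) ≤ 2 ^ Fintype.card ι * δ)
    (hδ : Fintype.card ι * δ ^ p ≤ r ^ p) :
    ∃ w : κ → ℝ, ‖w‖ ≤ 1 ∧ Fintype.card ι / (2 * r ^ p) ≤ ∑ i, |(B *ᵥ w) i| ^ p := by
  by_contra! hsmall
  set n := Fintype.card ι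
  set S := signVectors ι
  have hS : (#S : ℝ) = 2 ^ n := by simp [S, n, signVectors.card]
  choose w e hw hwe he using fun x : ι → ℝ => exists_eq_smul_add_abs_le (A *ᵥ x) hr
  have hδ' : n / (2 * r ^ p) * δ ^ p ≤ 1 / 2 := by
    rw [div_mul_eq_mul_div, div_le_iff₀ (by positivity)]
    linarith
  have hrow : ∀ i, ∑ x ∈ S, |(B *ᵥ e x) i| ^ p ≤ #S * (1 / 2) := fun i => by
    obtain ⟨w₀, hw₀, hR⟩ := exists_norm_le_one_sum_abs_rpow_le B i
    calc _ ≤ #S * ((∑ j, |B i j|) ^ p * δ ^ p) := sum_abs_mulVec_rpow_le hp0.le hp1 hδ0 B i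
          fun j => (sum_le_sum fun x _ => he x j).trans (hS ▸ htail j)
      _ ≤ #S * (1 / 2) := by grw [hR, hsmall w₀ hw₀, hδ']
  have hsplit : ∀ x ∈ S,
      (n : ℝ) ≤ r ^ p * ∑ i, |(B *ᵥ w x) i| ^ p + ∑ i, |(B *ᵥ e x) i| ^ p := fun x hx =>
    card_le_rpow_mul_sum_abs_mulVec_rpow_add hp0.le hp1 hr.le B (signVectors.abs_apply hx)
      (by rw [← hwe, mulVec_mulVec, hBA, one_mulVec])
  have hSne : S.Nonempty := card_pos.1 (by rw [signVectors.card]; positivity)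
  have : #S * (n : ℝ) < #S * n := calc
    #S * (n : ℝ) = ∑ x ∈ S, (n : ℝ) := by simp
    _ ≤ ∑ x ∈ S, (r ^ p * ∑ i, |(B *ᵥ w x) i| ^ p + ∑ i, |(B *ᵥ e x) i| ^ p) :=
      sum_le_sum hsplit
    _ = r ^ p * ∑ x ∈ S, ∑ i, |(B *ᵥ w x) i| ^ p + ∑ i, ∑ x ∈ S, |(B *ᵥ e x) i| ^ p := by
      rw [sum_add_distrib, mul_sum, sum_comm (s := S)]
    _ < r ^ p * ∑ x ∈ S, (n / (2 * r ^ p)) + ∑ i : ι, (#S * (1 / 2) : ℝ) :=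
      add_lt_add_of_lt_of_le
        (mul_lt_mul_of_pos_left (sum_lt_sum_of_nonempty hSne fun x _ => hsmall _ (hw x))
          (by positivity))
        (sum_le_sum fun i _ => hrow i)
    _ = #S * n := by
      simp only [sum_const, nsmul_eq_mul, card_univ]
      field_simp
      ring
  exact lt_irrefl _ this

end Factorization

lemma mul_rpow_two_mul_div_mul_exp_le {p n r : ℝ} (hp0 : 0 < p) (hn : 0 < n) (hlog : p ≤ log n)
    (hr : 0 < r) (hr2 : r ^ 2 = 2 / p * n * log n) :
    n * (2 * n / r * exp (-(r ^ 2 / (2 * n)))) ^ p ≤ r ^ p := by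
  have hexp : exp (-(r ^ 2 / (2 * n))) ^ p = n⁻¹ := by
    rw [← exp_mul, hr2, show -(2 / p * n * log n / (2 * n)) * p = -log n by field_simp,
      exp_neg, exp_log hn]
  rw [mul_rpow (by positivity) (by positivity), hexp, mul_left_comm, mul_inv_cancel₀ hn.ne',
    mul_one]
  gcongr
  rw [div_le_iff₀ hr, ← sq, hr2]
  have : 2 / p * n * p = 2 * n := by field_simp
  nlinarith [mul_le_mul_of_nonneg_left hlog (by positivity : (0 : ℝ) ≤ 2 / p * n)]

/-- Corollary 2: for `0 < p ≤ 1` there is `C > 0` (depending only on `p`) such that for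
all sufficiently large `n` and all `K ≥ 1`, if `P ∘ T = Id` is a factorization of the
identity on `ℓ^n_p` through `ℓ^K_∞` with `‖T x‖_∞ ≤ ‖x‖_p` for all `x`, then there is
`w` with `‖w‖_∞ ≤ 1` and `‖P w‖_p ≥ C n^{1/p - 1/2} (log n)^{-1/2}`. -/
theorem lower_bound_for_P_norm (p : ℝ) (hp0 : 0 < p) (hp1 : p ≤ 1) :
    ∃ C : ℝ, 0 < C ∧ ∃ n₀ : ℕ, ∀ n : ℕ, n₀ ≤ n → ∀ K : ℕ, 1 ≤ K →
      ∀ (T : (Fin n → ℝ) →ₗ[ℝ] (Fin K → ℝ)) (P : (Fin K → ℝ) →ₗ[ℝ] (Fin n → ℝ)),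
        P ∘ₗ T = LinearMap.id →
          (∀ x : Fin n → ℝ, ‖T x‖ ≤ (∑ i, |x i| ^ p) ^ (1 / p)) →
            ∃ w : Fin K → ℝ, ‖w‖ ≤ 1 ∧
              C * (n : ℝ) ^ (1 / p - 1 / 2) / Real.sqrt (Real.log n) ≤
                (∑ i, |P w i| ^ p) ^ (1 / p) := by
  refine ⟨(2 ^ (1 / p) * √(2 / p))⁻¹, by positivity, 3, fun n hn K _ T P hPT hT => ?_⟩
  have hn3 : (3 : ℝ) ≤ n := by exact_mod_cast hn
  have hlog : 1 ≤ log n := by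
    rw [le_log_iff_exp_le (by linarith)]
    linarith [exp_one_lt_d9]
  set r := √(2 / p) * √n * √(log n) with hr_def
  have hr : 0 < r := by positivity
  have hr2 : r ^ 2 = 2 / p * n * log n := by
    rw [hr_def, mul_pow, mul_pow, sq_sqrt (by positivity), sq_sqrt (by positivity),
      sq_sqrt (by positivity)]
  have hBA : LinearMap.toMatrix' P * LinearMap.toMatrix' T = 1 := by
    rw [← LinearMap.toMatrix'_comp, hPT, LinearMap.toMatrix'_id]
  have htail (j : Fin K) := signVectors.sum_max_abs_dotProduct_sub_le_exp_neg_sq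
    (abs_toMatrix'_apply_le_one hp0.ne' hT j) (by simp only [Fintype.card_fin]; omega) hr
  obtain ⟨w, hw, hlarge⟩ := exists_norm_le_one_card_div_le_sum_abs_mulVec_rpow
    (δ := 2 * n / r * exp (-(r ^ 2 / (2 * n)))) hp0 hp1 hr (by positivity) hBA
    (fun j => by simpa using htail j)
    (by simpa using mul_rpow_two_mul_div_mul_exp_le hp0 (by positivity) (hp1.trans hlog) hr hr2)
  refine ⟨w, hw, ?_⟩
  simp only [Fintype.card_fin, LinearMap.toMatrix'_mulVec] at hlarge
  calc _ = (n / (2 * r ^ p)) ^ (1 / p) := by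
        rw [div_rpow (by positivity) (by positivity), mul_rpow (by positivity) (by positivity),
          ← rpow_mul hr.le, mul_one_div_cancel hp0.ne', rpow_one, rpow_sub (by positivity),
          ← sqrt_eq_rpow, hr_def]
        field_simp
    _ ≤ _ := by gcongr
end

section
/- For each p with 0 < p ≤ 1 there exists a constant C > 0 such that the following holds for all sufficiently large integers n and all integers K ≥ 1: if T : ℝ^n → ℝ^K and P : ℝ^K → ℝ^n are linear maps with P ∘ T = Id, and M, L > 0 satisfy ‖T(x)‖_∞ ≤ M·‖x‖_p for all x ∈ ℝ^n and ‖P(w)‖_p ≤ L·‖w‖_∞ for all w ∈ ℝ^K, then M · L ≥ C · n^{1/p − 1/2} · (log n)^{-1/2}. -/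
/-!
Feed the sign vectors `ε ∈ {±1}ⁿ` through the factorization. Each coordinate of `T ε` is a
Rademacher sum with coefficients bounded by `M`, hence sub-Gaussian with variance at most `n M²`.
Clip `T ε` at level `b ≍ M √(n log n / p)`, writing `T ε = w + e` with `‖w‖_∞ ≤ b`. Averaged over
`ε`, the clipped-off part `e` is tiny in every coordinate, and every coordinate functional of `P`
has norm at most `L` on `ℓ_∞`; so unless `M L ≥ n ^ (1/p - 1/2)` anyway, some `ε` has
`∑ᵢ |(P e)ᵢ| ≤ n / 2`. Since `P w + P e = ε` and `0 < p ≤ 1`, each coordinate gives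
`1 ≤ |(P w)ᵢ| ^ p + |(P e)ᵢ|`, hence `n / 2 ≤ ‖P w‖_p ^ p ≤ (L b) ^ p`.
-/

open Finset Real

def clip (b x : ℝ) : ℝ := max (-b) (min b x)

lemma abs_clip_le {b : ℝ} (hb : 0 ≤ b) (x : ℝ) : |clip b x| ≤ b := by
  unfold clip
  grind [abs_le]

lemma abs_sub_clip_le_max {b : ℝ} (hb : 0 ≤ b) (x : ℝ) : |x - clip b x| ≤ max (|x| - b) 0 := by
  unfold clip
  grind [abs_le, abs_cases]

lemma abs_sub_clip_le {b c : ℝ} (hb : 0 ≤ b) (hc : 0 < c) (x : ℝ) :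
    |x - clip b x| ≤ exp (c * (|x| - b)) / c := by
  refine (abs_sub_clip_le_max hb x).trans (max_le ?_ (by positivity))
  rw [le_div_iff₀ hc, mul_comm]
  linarith [add_one_le_exp (c * (|x| - b))]

section Rademacher

variable {ι : Type*}

def signVec (ε : ι → Bool) : ι → ℝ := fun i => if ε i then 1 else -1

lemma abs_signVec (ε : ι → Bool) (i : ι) : |signVec ε i| = 1 := by
  unfold signVec; split <;> simp

variable [Fintype ι] [DecidableEq ι]

lemma sum_exp_sum_mul_signVec (a : ι → ℝ) :
    ∑ ε : ι → Bool, exp (∑ i, a i * signVec ε i) = ∏ i, 2 * cosh (a i) := by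
  simp_rw [exp_sum, signVec,
    ← Fintype.prod_sum (fun i (c : Bool) => exp (a i * if c then 1 else -1)), Fintype.sum_bool,
    cosh_eq]
  refine prod_congr rfl fun i _ => ?_
  simp only [if_true, Bool.false_eq_true, if_false, mul_one, mul_neg_one]
  ring

lemma sum_exp_sum_mul_signVec_le (a : ι → ℝ) :
    ∑ ε : ι → Bool, exp (∑ i, a i * signVec ε i) ≤
      2 ^ Fintype.card ι * exp ((∑ i, a i ^ 2) / 2) := by
  rw [sum_exp_sum_mul_signVec, sum_div, exp_sum, ← card_univ, ← prod_const, ← prod_mul_distrib]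
  exact prod_le_prod (fun i _ => by positivity) fun i _ =>
    mul_le_mul_of_nonneg_left (cosh_le_exp_half_sq _) zero_le_two

lemma sum_exp_mul_sum_mul_signVec_le {a : ι → ℝ} {σ : ℝ} (ha : ∑ i, a i ^ 2 ≤ σ ^ 2) (c : ℝ) :
    ∑ ε : ι → Bool, exp (c * ∑ i, a i * signVec ε i) ≤
      2 ^ Fintype.card ι * exp (c ^ 2 * σ ^ 2 / 2) := by
  simp_rw [mul_sum, ← mul_assoc]
  refine (sum_exp_sum_mul_signVec_le _).trans ?_
  gcongr
  simp_rw [mul_pow, ← mul_sum]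
  gcongr

lemma sum_abs_sub_clip_le {a : ι → ℝ} {σ t : ℝ} (hσ : 0 < σ) (ht : 2 ≤ t)
    (ha : ∑ i, a i ^ 2 ≤ σ ^ 2) :
    ∑ ε : ι → Bool, |∑ i, a i * signVec ε i - clip (t * σ) (∑ i, a i * signVec ε i)| ≤
      2 ^ Fintype.card ι * (σ * exp (-(t ^ 2 / 2))) := by
  have hc : 0 < t / σ := by positivity
  have hterm : ∀ x : ℝ, |x - clip (t * σ) x| ≤
      exp (-t ^ 2) / (t / σ) * (exp (t / σ * x) + exp (-(t / σ) * x)) := by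
    intro x
    calc |x - clip (t * σ) x| ≤ exp (t / σ * (|x| - t * σ)) / (t / σ) :=
          abs_sub_clip_le (by positivity) hc x
      _ = exp (-t ^ 2) / (t / σ) * exp (t / σ * |x|) := by
          rw [mul_sub, sub_eq_neg_add, exp_add]; field_simp
      _ ≤ _ := by
          gcongr
          rcases le_total 0 x with hx | hx
          · rw [abs_of_nonneg hx]; linarith [exp_pos (-(t / σ) * x)]
          · rw [abs_of_nonpos hx, mul_neg, ← neg_mul]; linarith [exp_pos (t / σ * x)]
  have hmgf : ∀ c, c ^ 2 = (t / σ) ^ 2 →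
      ∑ ε : ι → Bool, exp (c * ∑ i, a i * signVec ε i) ≤
        2 ^ Fintype.card ι * exp (t ^ 2 / 2) := by
    intro c hc2
    convert sum_exp_mul_sum_mul_signVec_le ha c using 3
    rw [hc2]; field_simp
  calc _ ≤ ∑ ε : ι → Bool, exp (-t ^ 2) / (t / σ) * (exp (t / σ * ∑ i, a i * signVec ε i) +
          exp (-(t / σ) * ∑ i, a i * signVec ε i)) := sum_le_sum fun ε _ => hterm _
    _ ≤ exp (-t ^ 2) / (t / σ) * (2 ^ Fintype.card ι * exp (t ^ 2 / 2) +
          2 ^ Fintype.card ι * exp (t ^ 2 / 2)) := by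
      rw [← mul_sum, sum_add_distrib]
      gcongr
      · exact hmgf _ rfl
      · exact hmgf _ (neg_sq _)
    _ = 2 ^ Fintype.card ι * (2 / t * σ * exp (-(t ^ 2 / 2))) := by
      have : exp (-t ^ 2) * exp (t ^ 2 / 2) = exp (-(t ^ 2 / 2)) := by
        rw [← exp_add]; ring_nf
      rw [← this]
      field_simp
      ring
    _ ≤ 2 ^ Fintype.card ι * (σ * exp (-(t ^ 2 / 2))) := by
      gcongr
      rw [div_mul_eq_mul_div, div_le_iff₀ (by linarith)]
      nlinarith

end Rademacher

section QuasiNorm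

variable {ι : Type*} [Fintype ι] {p : ℝ}

lemma abs_le_sum_abs_rpow_rpow (hp : 0 < p) (y : ι → ℝ) (i : ι) :
    |y i| ≤ (∑ k, |y k| ^ p) ^ (1 / p) := by
  calc |y i| = (|y i| ^ p) ^ (1 / p) := by
        rw [← rpow_mul (abs_nonneg _), mul_one_div_cancel hp.ne', rpow_one]
    _ ≤ _ := by
        gcongr
        exact single_le_sum (f := fun k => |y k| ^ p) (fun k _ => by positivity) (mem_univ i)

lemma one_le_rpow_add {a c : ℝ} (hp0 : 0 < p) (hp1 : p ≤ 1) (ha : 0 ≤ a) (hc : 0 ≤ c)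
    (h : 1 ≤ a + c) : 1 ≤ a ^ p + c := by
  rcases le_total a 1 with ha1 | ha1
  · linarith [self_le_rpow_of_le_one ha ha1 hp1]
  · linarith [one_le_rpow ha1 hp0.le]

end QuasiNorm

lemma sum_abs_le_of_abs_le_mul_norm {α κ : Type*} [Fintype α] [Fintype κ]
    (f : (κ → ℝ) →ₗ[ℝ] ℝ) {L B : ℝ} (hL : 0 ≤ L) (hB : 0 ≤ B) (hf : ∀ w, |f w| ≤ L * ‖w‖)
    (w : α → κ → ℝ) (hw : ∀ j, ∑ k, |w k j| ≤ B) :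
    ∑ k, |f (w k)| ≤ L * B := by
  set s := signVec fun k => decide (0 ≤ f (w k))
  have hs : ∀ k, s k * f (w k) = |f (w k)| := by
    intro k
    by_cases h : 0 ≤ f (w k)
    · simp [s, signVec, h, abs_of_nonneg h]
    · simp [s, signVec, h, abs_of_neg (not_le.1 h)]
  have hnorm : ‖∑ k, s k • w k‖ ≤ B := by
    refine (pi_norm_le_iff_of_nonneg hB).2 fun j => ?_
    rw [Real.norm_eq_abs, Finset.sum_apply]
    calc |∑ k, (s k • w k) j| ≤ ∑ k, |(s k • w k) j| := abs_sum_le_sum_abs _ _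
      _ = ∑ k, |w k j| := by simp [abs_mul, s, abs_signVec]
      _ ≤ B := hw j
  calc ∑ k, |f (w k)| = f (∑ k, s k • w k) := by simp [map_sum, hs]
    _ ≤ |f (∑ k, s k • w k)| := le_abs_self _
    _ ≤ L * ‖∑ k, s k • w k‖ := hf _
    _ ≤ L * B := by gcongr

section Factorization

variable {ι κ : Type*} [Fintype ι] {p L : ℝ}
  (T : (ι → ℝ) →ₗ[ℝ] (κ → ℝ)) (P : (κ → ℝ) →ₗ[ℝ] (ι → ℝ))

lemma card_le_sum_rpow_add_sum_abs (hPT : P ∘ₗ T = LinearMap.id) (hp0 : 0 < p) (hp1 : p ≤ 1)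
    (ε : ι → Bool) {w e : κ → ℝ} (hwe : w + e = T (signVec ε)) :
    (Fintype.card ι : ℝ) ≤ ∑ i, |P w i| ^ p + ∑ i, |P e i| := by
  have hsplit : ∀ i, P w i + P e i = signVec ε i := fun i => by
    rw [← Pi.add_apply, ← map_add, hwe, ← LinearMap.comp_apply, hPT, LinearMap.id_apply]
  rw [← sum_add_distrib, Fintype.card_eq_sum_ones, Nat.cast_sum, Nat.cast_one]
  refine sum_le_sum fun i _ => one_le_rpow_add hp0 hp1 (abs_nonneg _) (abs_nonneg _) ?_
  calc (1 : ℝ) = |P w i + P e i| := by rw [hsplit, abs_signVec]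
    _ ≤ |P w i| + |P e i| := abs_add_le _ _

variable [Fintype κ]

lemma exists_sum_abs_apply_le {α : Type*} [Fintype α] [Nonempty α] (hp0 : 0 < p) (hL : 0 ≤ L)
    (hP : ∀ w, (∑ i, |P w i| ^ p) ^ (1 / p) ≤ L * ‖w‖) {β : ℝ} (hβ : 0 ≤ β)
    (e : α → κ → ℝ) (he : ∀ j, ∑ k, |e k j| ≤ Fintype.card α * β) :
    ∃ k, ∑ i, |P (e k) i| ≤ Fintype.card ι * (L * β) := by
  have hcoord : ∀ i, ∑ k, |P (e k) i| ≤ L * (Fintype.card α * β) := fun i =>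
    sum_abs_le_of_abs_le_mul_norm (LinearMap.proj i ∘ₗ P) hL (by positivity)
      (fun w => (abs_le_sum_abs_rpow_rpow hp0 (P w) i).trans (hP w)) e he
  have htotal : ∑ k, ∑ i, |P (e k) i| ≤ ∑ _k : α, Fintype.card ι * (L * β) := by
    rw [sum_comm, sum_const, card_univ, nsmul_eq_mul]
    calc ∑ i, ∑ k, |P (e k) i| ≤ ∑ _i : ι, L * (Fintype.card α * β) :=
          sum_le_sum fun i _ => hcoord i
      _ = _ := by rw [sum_const, card_univ, nsmul_eq_mul]; ring
  obtain ⟨k, -, hk⟩ := exists_le_of_sum_le univ_nonempty htotal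
  exact ⟨k, hk⟩

variable [DecidableEq ι]

lemma card_div_two_le_rpow (hPT : P ∘ₗ T = LinearMap.id) (hp0 : 0 < p) (hp1 : p ≤ 1)
    (hL : 0 ≤ L) (hP : ∀ w, (∑ i, |P w i| ^ p) ^ (1 / p) ≤ L * ‖w‖) {b β : ℝ} (hb : 0 ≤ b)
    (hβ : 0 ≤ β) (hLβ : L * β ≤ 1 / 2)
    (herr : ∀ j, ∑ ε : ι → Bool, |T (signVec ε) j - clip b (T (signVec ε) j)| ≤
      2 ^ Fintype.card ι * β) :
    (Fintype.card ι : ℝ) / 2 ≤ (L * b) ^ p := by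
  have hcard : (Fintype.card (ι → Bool) : ℝ) = 2 ^ Fintype.card ι := by simp
  obtain ⟨ε, hε⟩ := exists_sum_abs_apply_le P hp0 hL hP hβ
    (fun ε => T (signVec ε) - fun j => clip b (T (signVec ε) j)) (hcard ▸ herr)
  set w : κ → ℝ := fun j => clip b (T (signVec ε) j)
  have hw : ∑ i, |P w i| ^ p ≤ (L * b) ^ p := by
    rw [← rpow_inv_le_iff_of_pos (by positivity) (by positivity) hp0, ← one_div]
    exact (hP w).trans (by gcongr; exact (pi_norm_le_iff_of_nonneg hb).2 fun j => abs_clip_le hb _)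
  have hcover := card_le_sum_rpow_add_sum_abs T P hPT hp0 hp1 ε (add_sub_cancel w _)
  have hhalf : (Fintype.card ι : ℝ) * (L * β) ≤ Fintype.card ι / 2 := by
    rw [div_eq_mul_one_div]; gcongr
  linarith

end Factorization

section Entries

variable {ι κ : Type*} [Fintype ι] [DecidableEq ι] (T : (ι → ℝ) →ₗ[ℝ] (κ → ℝ))

lemma apply_eq_sum_apply_single_mul (x : ι → ℝ) (j : κ) :
    T x j = ∑ i, T (Pi.single i 1) j * x i := by
  rw [← LinearMap.toMatrix'_mulVec]
  simp [Matrix.mulVec, dotProduct, LinearMap.toMatrix'_apply]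

lemma abs_apply_single_le [Fintype κ] {p : ℝ} (hp : 0 < p) {M : ℝ}
    (hT : ∀ x, ‖T x‖ ≤ M * (∑ i, |x i| ^ p) ^ (1 / p)) (i : ι) (j : κ) :
    |T (Pi.single i 1) j| ≤ M := by
  have hsingle : ∑ k, |(Pi.single i 1 : ι → ℝ) k| ^ p = 1 := by
    rw [sum_eq_single i (fun k _ hk => by simp [hk, zero_rpow hp.ne']) (by simp)]
    simp
  simpa [hsingle] using (norm_le_pi_norm (T (Pi.single i 1)) j).trans (hT _)

lemma sum_abs_sub_clip_apply_le [Nonempty ι] {M t : ℝ} (hM : 0 < M) (ht : 2 ≤ t)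
    (hT : ∀ i j, |T (Pi.single i 1) j| ≤ M) (j : κ) :
    ∑ ε : ι → Bool, |T (signVec ε) j - clip (t * (M * √(Fintype.card ι))) (T (signVec ε) j)| ≤
      2 ^ Fintype.card ι * (M * √(Fintype.card ι) * exp (-(t ^ 2 / 2))) := by
  have hrow : ∑ i, T (Pi.single i 1) j ^ 2 ≤ (M * √(Fintype.card ι)) ^ 2 := by
    rw [mul_pow, sq_sqrt (Nat.cast_nonneg _), mul_comm, Fintype.card_eq_sum_ones, Nat.cast_sum,
      Nat.cast_one, sum_mul, one_mul]
    exact sum_le_sum fun i _ => by rw [← sq_abs]; gcongr; exact hT i j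
  simp_rw [apply_eq_sum_apply_single_mul T (signVec _) j]
  exact sum_abs_sub_clip_le (by positivity) ht hrow

end Entries

lemma one_le_log_of_three_le {x : ℝ} (hx : 3 ≤ x) : 1 ≤ log x := by
  rw [le_log_iff_exp_le (by linarith)]
  exact (exp_one_lt_d9.trans (by norm_num)).le.trans hx

lemma mul_sqrt_mul_rpow_le_half {p n y : ℝ} (hp0 : 0 < p) (hp1 : p ≤ 1) (hn : 2 ≤ n)
    (hy : y ≤ n ^ (1 / p - 1 / 2)) :
    y * (√n * n ^ (-(2 / p))) ≤ 1 / 2 := by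
  have hn0 : 0 < n := by linarith
  calc y * (√n * n ^ (-(2 / p))) ≤ n ^ (1 / p - 1 / 2) * (√n * n ^ (-(2 / p))) := by gcongr
    _ = n ^ (-(1 / p)) := by
      rw [sqrt_eq_rpow, ← rpow_add hn0, ← rpow_add hn0]; ring_nf
    _ ≤ n ^ (-1 : ℝ) := by
      gcongr
      · linarith
      · rw [le_div_iff₀ hp0]; linarith
    _ ≤ 1 / 2 := by
      rw [rpow_neg_one, one_div]
      gcongr

lemma div_sqrt_log_le_rpow {p n : ℝ} (hp0 : 0 < p) (hp1 : p ≤ 1) (hn : 3 ≤ n) :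
    √p / (2 * 2 ^ (1 / p)) * n ^ (1 / p - 1 / 2) / √(log n) ≤ n ^ (1 / p - 1 / 2) := by
  have hC : √p / (2 * 2 ^ (1 / p)) ≤ 1 := by
    rw [div_le_one (by positivity)]
    have : 1 ≤ (2 : ℝ) ^ (1 / p) := one_le_rpow (by norm_num) (by positivity)
    nlinarith [sqrt_le_one.2 hp1]
  have hlog : 1 ≤ √(log n) := one_le_sqrt.2 (one_le_log_of_three_le hn)
  refine div_le_of_le_mul₀ (by positivity) (by positivity) ?_
  nlinarith [rpow_nonneg (by linarith : 0 ≤ n) (1 / p - 1 / 2)]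

lemma div_sqrt_log_le_of_half_le_rpow {p n y : ℝ} (hp0 : 0 < p) (hn : 3 ≤ n) (hy : 0 ≤ y)
    (h : n / 2 ≤ (2 * √(log n / p) * √n * y) ^ p) :
    √p / (2 * 2 ^ (1 / p)) * n ^ (1 / p - 1 / 2) / √(log n) ≤ y := by
  have hn0 : 0 < n := by linarith
  have hlog : 0 < √(log n) := sqrt_pos.2 (by linarith [one_le_log_of_three_le hn])
  have hroot : (n / 2) ^ (1 / p) ≤ 2 * √(log n / p) * √n * y := by
    rwa [one_div, rpow_inv_le_iff_of_pos (by positivity) (by positivity) hp0]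
  rw [div_le_iff₀ hlog]
  calc √p / (2 * 2 ^ (1 / p)) * n ^ (1 / p - 1 / 2)
      = √p / (2 * √n) * (n / 2) ^ (1 / p) := by
        rw [div_rpow hn0.le zero_le_two, sqrt_eq_rpow, rpow_sub hn0]
        field_simp
        rw [sqrt_eq_rpow]
    _ ≤ √p / (2 * √n) * (2 * √(log n / p) * √n * y) := by gcongr
    _ = y * √(log n) := by
        rw [sqrt_div (by linarith [one_le_log_of_three_le hn])]
        field_simp

/-- Factorization constant for `ℓ^n_p`, `0 < p ≤ 1`: there is `C > 0` (depending only
on `p`) such that for all sufficiently large `n` and all `K ≥ 1`, any factorization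
`P ∘ T = Id` of the identity on `ℓ^n_p` through `ℓ^K_∞` with `‖T x‖_∞ ≤ M ‖x‖_p` and
`‖P w‖_p ≤ L ‖w‖_∞` satisfies `M L ≥ C n^{1/p - 1/2} (log n)^{-1/2}`. -/
theorem factorization_constant_lnp (p : ℝ) (hp0 : 0 < p) (hp1 : p ≤ 1) :
    ∃ C : ℝ, 0 < C ∧ ∃ n₀ : ℕ, ∀ n : ℕ, n₀ ≤ n → ∀ K : ℕ, 1 ≤ K →
      ∀ (T : (Fin n → ℝ) →ₗ[ℝ] (Fin K → ℝ)) (P : (Fin K → ℝ) →ₗ[ℝ] (Fin n → ℝ)),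
        P ∘ₗ T = LinearMap.id →
          ∀ M L : ℝ, 0 < M → 0 < L →
            (∀ x : Fin n → ℝ, ‖T x‖ ≤ M * (∑ i, |x i| ^ p) ^ (1 / p)) →
            (∀ w : Fin K → ℝ, (∑ i, |P w i| ^ p) ^ (1 / p) ≤ L * ‖w‖) →
              C * (n : ℝ) ^ (1 / p - 1 / 2) / Real.sqrt (Real.log n) ≤ M * L := by
  refine ⟨√p / (2 * 2 ^ (1 / p)), by positivity, 3, fun n hn K _ T P hPT M L hM hL hT hP => ?_⟩
  have hn3 : (3 : ℝ) ≤ n := by exact_mod_cast hn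
  rcases le_or_gt ((n : ℝ) ^ (1 / p - 1 / 2)) (M * L) with hML | hML
  · exact (div_sqrt_log_le_rpow hp0 hp1 hn3).trans hML
  have : Nonempty (Fin n) := ⟨⟨0, by omega⟩⟩
  set t := 2 * √(log n / p) with ht_def
  have ht : 2 ≤ t := by
    rw [ht_def, le_mul_iff_one_le_right two_pos, one_le_sqrt, one_le_div hp0]
    linarith [one_le_log_of_three_le hn3]
  -- `t` is chosen so that the Gaussian tail `exp (-t² / 2)` equals `n ^ (-2 / p)`
  have hexp : exp (-(t ^ 2 / 2)) = (n : ℝ) ^ (-(2 / p)) := by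
    rw [ht_def, mul_pow, sq_sqrt (by positivity), rpow_def_of_pos (by positivity)]
    congr 1; ring
  have key : (n : ℝ) / 2 ≤ (t * √n * (M * L)) ^ p := by
    convert card_div_two_le_rpow T P hPT hp0 hp1 hL.le hP (b := t * (M * √n))
      (β := M * √n * (n : ℝ) ^ (-(2 / p))) (by positivity) (by positivity)
      (by linarith [mul_sqrt_mul_rpow_le_half hp0 hp1 (by linarith) hML.le])
      (by simpa [hexp] using sum_abs_sub_clip_apply_le T hM ht (abs_apply_single_le T hp0 hT))
      using 2
    · simp
    · ring
  exact div_sqrt_log_le_of_half_le_rpow hp0 hn3 (by positivity) key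
end

section
/- Let 0 < p < 1 and let n ≥ 1 be an integer. Set K = 2^n, index the coordinates of ℝ^K by sign vectors s ∈ {-1,1}^n, and define linear maps T : ℝ^n → ℝ^K by (T x)_s = ∑_{i=1}^n x_i s_i and P : ℝ^K → ℝ^n by (P w)_i = 2^{-n} ∑_{s ∈ {-1,1}^n} w_s s_i. Then P ∘ T = Id on ℝ^n, ‖T x‖_∞ ≤ ‖x‖_p for all x ∈ ℝ^n, and ‖P w‖_p ≤ n^{1/p − 1/2} · ‖w‖_∞ for all w ∈ ℝ^K. -/
/-! The Rademacher functions `s ↦ s i` are orthogonal on `{-1,1}^n`, with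
`∑ s, s i * s j = 2^n δ_ij`; this gives `P ∘ T = id` and, by Bessel's inequality,
`‖P w‖₂ ≤ (2^{-n} ∑ s, w s ^ 2)^{1/2} ≤ ‖w‖_∞`. Passing from `ℓ²` to `ℓ^p` costs the factor
`n^{1/p - 1/2}` by Hölder. In the other direction `‖T x‖_∞ ≤ ‖x‖₁ ≤ ‖x‖_p`, the last step
because `t ↦ t^{1/p}` is superadditive for `p ≤ 1`. -/

open Finset

theorem Real.sum_rpow_le_rpow_sum_of_nonneg {ι : Type*} (s : Finset ι) {f : ι → ℝ}
    (hf : ∀ i ∈ s, 0 ≤ f i) {q : ℝ} (hq : 1 ≤ q) :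
    ∑ i ∈ s, f i ^ q ≤ (∑ i ∈ s, f i) ^ q := by
  have hS : 0 ≤ ∑ i ∈ s, f i := sum_nonneg hf
  have hsplit : ∀ x : ℝ, 0 ≤ x → x ^ q = x * x ^ (q - 1) := fun x hx => by
    rw [← Real.rpow_one_add' hx (by linarith), add_sub_cancel]
  calc ∑ i ∈ s, f i ^ q = ∑ i ∈ s, f i * f i ^ (q - 1) :=
        sum_congr rfl fun i hi => hsplit _ (hf i hi)
    _ ≤ ∑ i ∈ s, f i * (∑ j ∈ s, f j) ^ (q - 1) := by
        gcongr with i hi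
        exacts [hf i hi, hf i hi, single_le_sum hf hi]
    _ = (∑ i ∈ s, f i) ^ q := by rw [← sum_mul, ← hsplit _ hS]

theorem Real.sum_abs_le_rpow_sum_abs_rpow {ι : Type*} (s : Finset ι) (x : ι → ℝ)
    {p : ℝ} (hp0 : 0 < p) (hp1 : p ≤ 1) :
    ∑ i ∈ s, |x i| ≤ (∑ i ∈ s, |x i| ^ p) ^ (1 / p) := by
  calc ∑ i ∈ s, |x i| = ∑ i ∈ s, (|x i| ^ p) ^ (1 / p) :=
        sum_congr rfl fun i _ => by rw [one_div, Real.rpow_rpow_inv (abs_nonneg _) hp0.ne']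
    _ ≤ (∑ i ∈ s, |x i| ^ p) ^ (1 / p) :=
        sum_rpow_le_rpow_sum_of_nonneg s (fun i _ => by positivity)
          (by rw [le_div_iff₀ hp0]; linarith)

theorem Real.rpow_sum_abs_rpow_le_card_rpow_mul_sqrt {ι : Type*} (s : Finset ι) (x : ι → ℝ)
    {p : ℝ} (hp0 : 0 < p) (hp2 : p ≤ 2) :
    (∑ i ∈ s, |x i| ^ p) ^ (1 / p) ≤ (#s : ℝ) ^ (1 / p - 1 / 2) * √(∑ i ∈ s, x i ^ 2) := by
  have hq : 1 ≤ 2 / p := by rw [le_div_iff₀ hp0]; linarith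
  have hpow : ∀ i, (|x i| ^ p) ^ (2 / p) = x i ^ 2 := fun i => by
    rw [← Real.rpow_mul (abs_nonneg _), mul_div_cancel₀ _ hp0.ne', Real.rpow_two, sq_abs]
  have hholder := Real.rpow_sum_le_const_mul_sum_rpow_of_nonneg s hq
    (f := fun i => |x i| ^ p) (fun i _ => by positivity)
  simp only [hpow] at hholder
  have hS : 0 ≤ ∑ i ∈ s, |x i| ^ p := sum_nonneg fun i _ => by positivity
  calc (∑ i ∈ s, |x i| ^ p) ^ (1 / p) = ((∑ i ∈ s, |x i| ^ p) ^ (2 / p)) ^ (1 / 2 : ℝ) := by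
        rw [← Real.rpow_mul hS]; field_simp
    _ ≤ ((#s : ℝ) ^ (2 / p - 1) * ∑ i ∈ s, x i ^ 2) ^ (1 / 2 : ℝ) := by gcongr
    _ = (#s : ℝ) ^ (1 / p - 1 / 2) * √(∑ i ∈ s, x i ^ 2) := by
        rw [Real.mul_rpow (by positivity) (sum_nonneg fun i _ => sq_nonneg _),
          ← Real.rpow_mul (by positivity), Real.sqrt_eq_rpow]
        ring_nf

namespace Rademacher

variable {ι : Type*}

def sign (i : ι) (s : ι → Bool) : ℝ := if s i then 1 else -1

theorem sign_mul_self (i : ι) (s : ι → Bool) : sign i s * sign i s = 1 := by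
  unfold sign; split_ifs <;> norm_num

theorem abs_sign (i : ι) (s : ι → Bool) : |sign i s| = 1 := by
  unfold sign; split_ifs <;> norm_num

variable [DecidableEq ι]

theorem sign_update_not_self (i : ι) (s : ι → Bool) :
    sign i (Function.update s i (!s i)) = -sign i s := by
  simp only [sign, Function.update_self]
  cases s i <;> norm_num

variable [Fintype ι]

def embedding (x : ι → ℝ) (s : ι → Bool) : ℝ := ∑ j, x j * sign j s

noncomputable def projection (w : (ι → Bool) → ℝ) (i : ι) : ℝ :=
  ((2 : ℝ) ^ Fintype.card ι)⁻¹ * ∑ s, w s * sign i s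

theorem sum_sign_mul_sign (i j : ι) :
    ∑ s : ι → Bool, sign i s * sign j s = if i = j then 2 ^ Fintype.card ι else 0 := by
  split_ifs with hij
  · subst hij
    simp [sign_mul_self]
  · -- flipping the `i`-th sign negates every term
    let flip (s : ι → Bool) : ι → Bool := Function.update s i (!s i)
    have hflip : Function.Involutive flip := fun s => by simp [flip]
    have hterm : ∀ s, sign i (flip s) * sign j (flip s) = -(sign i s * sign j s) := fun s => by
      have hj : sign j (flip s) = sign j s := by
        simp only [flip, sign, Function.update_of_ne (Ne.symm hij)]
      rw [hj, sign_update_not_self, neg_mul]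
    have := Equiv.sum_comp (hflip.toPerm flip) fun s => sign i s * sign j s
    simp only [Function.Involutive.coe_toPerm, hterm, sum_neg_distrib] at this
    linarith

theorem sum_embedding_mul_sign (x : ι → ℝ) (i : ι) :
    ∑ s, embedding x s * sign i s = 2 ^ Fintype.card ι * x i := by
  simp only [embedding, sum_mul, mul_assoc]
  rw [sum_comm]
  simp [← mul_sum, sum_sign_mul_sign, mul_comm]

theorem projection_embedding (x : ι → ℝ) : projection (embedding x) = x := by
  ext i
  rw [projection, sum_embedding_mul_sign, inv_mul_cancel_left₀ (by positivity)]

theorem sum_embedding_mul (x : ι → ℝ) (w : (ι → Bool) → ℝ) :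
    ∑ s, embedding x s * w s = 2 ^ Fintype.card ι * ∑ i, x i * projection w i := by
  simp only [embedding, projection, sum_mul, mul_sum]
  rw [sum_comm]
  refine sum_congr rfl fun i _ => sum_congr rfl fun s _ => ?_
  field_simp

theorem two_pow_card_mul_sum_projection_sq_le (w : (ι → Bool) → ℝ) :
    2 ^ Fintype.card ι * ∑ i, projection w i ^ 2 ≤ ∑ s, w s ^ 2 := by
  -- Bessel: expand `0 ≤ ∑ s, (w s - embedding (projection w) s) ^ 2`
  set a := projection w
  have hw : ∑ s, embedding a s * w s = 2 ^ Fintype.card ι * ∑ i, a i ^ 2 := by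
    simp only [sum_embedding_mul, sq, a]
  have ha : ∑ s, embedding a s ^ 2 = 2 ^ Fintype.card ι * ∑ i, a i ^ 2 := by
    simp only [sq, sum_embedding_mul, projection_embedding]
  have hexpand : ∑ s, (w s - embedding a s) ^ 2
      = ∑ s, w s ^ 2 - 2 * ∑ s, embedding a s * w s + ∑ s, embedding a s ^ 2 := by
    simp only [sub_sq, sum_add_distrib, sum_sub_distrib, mul_sum]
    congr 2; refine sum_congr rfl fun s _ => by ring
  have hnonneg : 0 ≤ ∑ s, (w s - embedding a s) ^ 2 := sum_nonneg fun s _ => sq_nonneg _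
  linarith

theorem norm_embedding_le (x : ι → ℝ) : ‖embedding x‖ ≤ ∑ i, |x i| := by
  refine (pi_norm_le_iff_of_nonneg (sum_nonneg fun i _ => abs_nonneg _)).2 fun s => ?_
  calc ‖embedding x s‖ ≤ ∑ j, |x j * sign j s| := abs_sum_le_sum_abs _ _
    _ = ∑ j, |x j| := by simp [abs_mul, abs_sign]

theorem sqrt_sum_projection_sq_le_norm (w : (ι → Bool) → ℝ) :
    √(∑ i, projection w i ^ 2) ≤ ‖w‖ := by
  rw [Real.sqrt_le_left (norm_nonneg w)]
  have hsup : ∑ s, w s ^ 2 ≤ 2 ^ Fintype.card ι * ‖w‖ ^ 2 := by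
    calc ∑ s, w s ^ 2 ≤ ∑ _s : ι → Bool, ‖w‖ ^ 2 := by
          refine sum_le_sum fun s _ => ?_
          simpa only [Real.norm_eq_abs, sq_abs] using
            pow_le_pow_left₀ (norm_nonneg _) (norm_le_pi_norm w s) 2
      _ = 2 ^ Fintype.card ι * ‖w‖ ^ 2 := by simp
  exact le_of_mul_le_mul_left ((two_pow_card_mul_sum_projection_sq_le w).trans hsup)
    (by positivity)

end Rademacher

theorem rademacher_factorization_general (p : ℝ) (hp0 : 0 < p) (hp1 : p < 1)
    (n : ℕ) :
    (∀ x : Fin n → ℝ, ∀ i : Fin n,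
        ((2 : ℝ) ^ n)⁻¹ * ∑ s : Fin n → Bool,
            (∑ j, x j * (if s j then (1 : ℝ) else -1)) *
              (if s i then (1 : ℝ) else -1) = x i) ∧
    (∀ x : Fin n → ℝ,
        ‖(fun s : Fin n → Bool => ∑ j, x j * (if s j then (1 : ℝ) else -1))‖ ≤
          (∑ i, |x i| ^ p) ^ (1 / p)) ∧
    (∀ w : (Fin n → Bool) → ℝ,
        (∑ i, |((2 : ℝ) ^ n)⁻¹ *
              ∑ s : Fin n → Bool, w s * (if s i then (1 : ℝ) else -1)| ^ p) ^
            (1 / p) ≤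
          (n : ℝ) ^ (1 / p - 1 / 2) * ‖w‖) := by
  have hP (w : (Fin n → Bool) → ℝ) (i : Fin n) : Rademacher.projection w i =
      ((2 : ℝ) ^ n)⁻¹ * ∑ s : Fin n → Bool, w s * (if s i then (1 : ℝ) else -1) := by
    rw [Rademacher.projection, Fintype.card_fin]; rfl
  refine ⟨fun x i => ?_, fun x => ?_, fun w => ?_⟩
  · exact (hP _ i).symm.trans (congrFun (Rademacher.projection_embedding x) i)
  · exact (Rademacher.norm_embedding_le x).trans
      (Real.sum_abs_le_rpow_sum_abs_rpow univ x hp0 hp1.le)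
  · simp only [← hP]
    calc _ ≤ (n : ℝ) ^ (1 / p - 1 / 2) * √(∑ i, Rademacher.projection w i ^ 2) := by
          simpa using Real.rpow_sum_abs_rpow_le_card_rpow_mul_sqrt univ
            (Rademacher.projection w) hp0 (by linarith)
      _ ≤ (n : ℝ) ^ (1 / p - 1 / 2) * ‖w‖ := by
          gcongr
          exact Rademacher.sqrt_sum_projection_sq_le_norm w

/-- The explicit factorization of the identity on `ℓ^n_p` through `ℓ^{2^n}_∞` via
Rademacher functions: with `(T x) s = ∑ i, x i * s i` and
`(P w) i = 2^{-n} ∑ s, w s * s i` (coordinates indexed by sign vectors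
`s ∈ {-1,1}^n`, encoded as `Fin n → Bool`), one has `P ∘ T = Id`,
`‖T x‖_∞ ≤ ‖x‖_p` and `‖P w‖_p ≤ n^{1/p - 1/2} ‖w‖_∞`.
Here `(Fin n → Bool) → ℝ` carries the sup norm. -/
theorem rademacher_factorization (p : ℝ) (hp0 : 0 < p) (hp1 : p < 1)
    (n : ℕ) (hn : 1 ≤ n) :
    (∀ x : Fin n → ℝ, ∀ i : Fin n,
        ((2 : ℝ) ^ n)⁻¹ * ∑ s : Fin n → Bool,
            (∑ j, x j * (if s j then (1 : ℝ) else -1)) *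
              (if s i then (1 : ℝ) else -1) = x i) ∧
    (∀ x : Fin n → ℝ,
        ‖(fun s : Fin n → Bool => ∑ j, x j * (if s j then (1 : ℝ) else -1))‖ ≤
          (∑ i, |x i| ^ p) ^ (1 / p)) ∧
    (∀ w : (Fin n → Bool) → ℝ,
        (∑ i, |((2 : ℝ) ^ n)⁻¹ *
              ∑ s : Fin n → Bool, w s * (if s i then (1 : ℝ) else -1)| ^ p) ^
            (1 / p) ≤
          (n : ℝ) ^ (1 / p - 1 / 2) * ‖w‖) :=
  rademacher_factorization_general p hp0 hp1 n
end
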